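/- Let P be a double histogram and let v, w ∈ V(P) be two vertices on the same side of the base line. Then the intervals I(v) and I(w) form a laminar pair: either I(v) ∩ I(w) = ∅, or I(v) ⊆ I(w), or I(w) ⊆ I(v). -/

import Mathlib

open Classical Set

noncomputable section

/-- A *double histogram*: an `x`-monotone orthogonal polygon in general position whose
base line lies on the `x`-axis.  It is described by its bottom columns (over the
breakpoints `xs` with depths `d < 0`) and its top columns (over the breakpoints `ys`
with heights `h > 0`).  A *simple histogram* is the special case `n = 1`, where the
upper boundary is the single (base) edge at height `h 0`. -/
structure DoubleHistogram where
  m : ℕ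
  n : ℕ
  hm : 0 < m
  hn : 0 < n
  xs : Fin (m + 1) → ℝ
  ys : Fin (n + 1) → ℝ
  d : Fin m → ℝ
  h : Fin n → ℝ
  xs_mono : StrictMono xs
  ys_mono : StrictMono ys
  left_eq : ys 0 = xs 0
  right_eq : ys (Fin.last n) = xs (Fin.last m)
  d_neg : ∀ i, d i < 0
  h_pos : ∀ j, 0 < h j
  /-- general position: no three vertices on a horizontal line -/
  d_inj : Function.Injective d
  h_inj : Function.Injective h
  /-- general position: no three vertices on a vertical line -/
  gen_pos : ∀ (i : Fin (m + 1)) (j : Fin (n + 1)), xs i = ys j →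
      (i = 0 ∧ j = 0) ∨ (i = Fin.last m ∧ j = Fin.last n)

/-- Among the reals in `A`, the one of minimum absolute value
(i.e. "closest to the base line"). -/
def closestToBase (A : Set ℝ) : ℝ :=
  sSup {y | y ∈ A ∧ ∀ y' ∈ A, |y| ≤ |y'|}

/-- The leftmost point of `S` among those minimizing the distance `|y|` to the base line. -/
def leftmostLowest (S : Set (ℝ × ℝ)) : ℝ × ℝ :=
  (sInf {x | ∃ y, (x, y) ∈ S ∧ ∀ q ∈ S, |y| ≤ |q.2|},
    closestToBase {y | (sInf {x | ∃ y', (x, y') ∈ S ∧ ∀ q ∈ S, |y'| ≤ |q.2|}, y) ∈ S})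

namespace DoubleHistogram

variable (H : DoubleHistogram)

/-- The polygon `P`, as a closed region of the plane. -/
def region : Set (ℝ × ℝ) :=
  (⋃ i : Fin H.m, Icc (H.xs i.castSucc) (H.xs i.succ) ×ˢ Icc (H.d i) 0) ∪
    ⋃ j : Fin H.n, Icc (H.ys j.castSucc) (H.ys j.succ) ×ˢ Icc 0 (H.h j)

/-- The vertex set `V(P)`. -/
def verts : Set (ℝ × ℝ) :=
  (⋃ i : Fin H.m,
      ({(H.xs i.castSucc, H.d i), (H.xs i.succ, H.d i)} : Set (ℝ × ℝ))) ∪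
    ⋃ j : Fin H.n,
      ({(H.ys j.castSucc, H.h j), (H.ys j.succ, H.h j)} : Set (ℝ × ℝ))

/-- `p` and `q` are co-visible: the axis-parallel rectangle they span lies in `P`. -/
def covisible (p q : ℝ × ℝ) : Prop :=
  Icc (min p.1 q.1) (max p.1 q.1) ×ˢ Icc (min p.2 q.2) (max p.2 q.2) ⊆ H.region

lemma covisible_symm {p q : ℝ × ℝ} (hpq : H.covisible p q) : H.covisible q p := by
  unfold covisible at hpq ⊢
  rwa [min_comm q.1 p.1, max_comm q.1 p.1, min_comm q.2 p.2, max_comm q.2 p.2]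

/-- The (unweighted) visibility graph `G(P)` on the vertices of `P`. -/
def visGraph : SimpleGraph ↥H.verts where
  Adj u v := u ≠ v ∧ H.covisible ↑u ↑v
  symm := ⟨fun _ _ hu => ⟨hu.1.symm, H.covisible_symm hu.2⟩⟩
  loopless := ⟨fun _ hu => hu.1 rfl⟩

/-- The closed neighborhood `N(v)`: `v` together with the vertices it sees. -/
def Nbr (v : ℝ × ℝ) : Set (ℝ × ℝ) :=
  {w | w ∈ H.verts ∧ (w = v ∨ H.covisible v w)}

/-- The abscissa where the leftward horizontal ray from `v` hits the boundary of `P`. -/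
def lhit (v : ℝ × ℝ) : ℝ :=
  sInf {x | x ≤ v.1 ∧ Icc x v.1 ×ˢ ({v.2} : Set ℝ) ⊆ H.region}

/-- The abscissa where the rightward horizontal ray from `v` hits the boundary of `P`. -/
def rhit (v : ℝ × ℝ) : ℝ :=
  sSup {x | v.1 ≤ x ∧ Icc v.1 x ×ˢ ({v.2} : Set ℝ) ⊆ H.region}

/-- The `y`-coordinate, among the vertices of `P` with abscissa `x` lying on the same side
of the base line as `side`, of the one closest to the base line (i.e. the endpoint of the
vertical edge at `x` closer to the base line). -/
def nearY (x : ℝ) (side : ℝ) : ℝ :=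
  if side < 0 then sSup {y | y < 0 ∧ (x, y) ∈ H.verts}
  else sInf {y | 0 < y ∧ (x, y) ∈ H.verts}

/-- The left point `ℓ(v)` (double-histogram version): if the leftward ray from `v` hits the
left boundary then the hit point, otherwise the endpoint of the hit vertical edge closer to
the base line. -/
def lpt (v : ℝ × ℝ) : ℝ × ℝ :=
  if H.lhit v = H.xs 0 then (H.xs 0, v.2) else (H.lhit v, H.nearY (H.lhit v) v.2)

/-- The right point `r(v)` (double-histogram version). -/
def rpt (v : ℝ × ℝ) : ℝ × ℝ :=
  if H.rhit v = H.xs (Fin.last H.m) then (H.xs (Fin.last H.m), v.2)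
  else (H.rhit v, H.nearY (H.rhit v) v.2)

/-- The left base vertex (for a simple histogram, i.e. `n = 1`). -/
def baseL : ℝ × ℝ := (H.xs 0, H.h ⟨0, H.hn⟩)

/-- The right base vertex (for a simple histogram, i.e. `n = 1`). -/
def baseR : ℝ × ℝ := (H.xs (Fin.last H.m), H.h ⟨0, H.hn⟩)

/-- The left point `ℓ(v)` (simple-histogram version): if the leftward ray from `v` hits the
left boundary then the left base vertex, otherwise the endpoint of the hit vertical edge
closer to the base edge. -/
def lptS (v : ℝ × ℝ) : ℝ × ℝ :=
  if H.lhit v = H.xs 0 then H.baseL else (H.lhit v, H.nearY (H.lhit v) v.2)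

/-- The right point `r(v)` (simple-histogram version). -/
def rptS (v : ℝ × ℝ) : ℝ × ℝ :=
  if H.rhit v = H.xs (Fin.last H.m) then H.baseR
  else (H.rhit v, H.nearY (H.rhit v) v.2)

/-- The interval `[p, q]`: all vertices of `P` between `p` and `q`. -/
def ivl (p q : ℝ × ℝ) : Set (ℝ × ℝ) :=
  {u | u ∈ H.verts ∧ p.1 ≤ u.1 ∧ u.1 ≤ q.1}

/-- The interval `I(v) = [ℓ(v), r(v)]` of a vertex (double-histogram version). -/
def Iv (v : ℝ × ℝ) : Set (ℝ × ℝ) := H.ivl (H.lpt v) (H.rpt v)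

/-- The interval `I(v) = [ℓ(v), r(v)]` of a vertex (simple-histogram version). -/
def IvS (v : ℝ × ℝ) : Set (ℝ × ℝ) := H.ivl (H.lptS v) (H.rptS v)

/-- The corresponding vertex `cv(v)`: the unique other vertex sharing a horizontal edge
(equivalently, by general position, the `y`-coordinate) with `v`. -/
def cv (v : ℝ × ℝ) : ℝ × ℝ :=
  (sSup {x | (x, v.2) ∈ H.verts ∧ x ≠ v.1}, v.2)

/-- `v` is a left vertex: the left endpoint of its horizontal edge. -/
def IsLeftVert (v : ℝ × ℝ) : Prop :=
  (∃ i : Fin H.m, v = (H.xs i.castSucc, H.d i)) ∨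
    ∃ j : Fin H.n, v = (H.ys j.castSucc, H.h j)

/-- `v` is a right vertex: the right endpoint of its horizontal edge. -/
def IsRightVert (v : ℝ × ℝ) : Prop :=
  (∃ i : Fin H.m, v = (H.xs i.succ, H.d i)) ∨
    ∃ j : Fin H.n, v = (H.ys j.succ, H.h j)

/-- `v` is an `ℓ`-reflex vertex (a left vertex with interior angle `3π/2`). -/
def IsLReflex (v : ℝ × ℝ) : Prop :=
  (∃ i : Fin H.m, ∃ _ : 0 < (i : ℕ),
      v = (H.xs i.castSucc, H.d i) ∧
        H.d ⟨(i : ℕ) - 1, lt_of_le_of_lt (Nat.sub_le _ _) i.isLt⟩ < H.d i) ∨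
    ∃ j : Fin H.n, ∃ _ : 0 < (j : ℕ),
      v = (H.ys j.castSucc, H.h j) ∧
        H.h j < H.h ⟨(j : ℕ) - 1, lt_of_le_of_lt (Nat.sub_le _ _) j.isLt⟩

/-- `v` is an `r`-reflex vertex (a right vertex with interior angle `3π/2`). -/
def IsRReflex (v : ℝ × ℝ) : Prop :=
  (∃ i : Fin H.m, ∃ hi : (i : ℕ) + 1 < H.m,
      v = (H.xs i.succ, H.d i) ∧ H.d ⟨(i : ℕ) + 1, hi⟩ < H.d i) ∨
    ∃ j : Fin H.n, ∃ hj : (j : ℕ) + 1 < H.n,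
      v = (H.ys j.succ, H.h j) ∧ H.h j < H.h ⟨(j : ℕ) + 1, hj⟩

/-- `v` is a reflex vertex. -/
def IsReflex (v : ℝ × ℝ) : Prop := H.IsLReflex v ∨ H.IsRReflex v

/-- The near dominator `nd(s,t)`: for `t` strictly right of `s`, the rightmost vertex of
`N(s)` to the left of `t`, ties broken towards the base line (symmetric otherwise). -/
def nd (s t : ℝ × ℝ) : ℝ × ℝ :=
  if s.1 < t.1 then
    let nx := sSup {x | (∃ y, (x, y) ∈ H.Nbr s) ∧ x ≤ t.1}
    (nx, closestToBase {y | (nx, y) ∈ H.Nbr s})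
  else
    let nx := sInf {x | (∃ y, (x, y) ∈ H.Nbr s) ∧ t.1 ≤ x}
    (nx, closestToBase {y | (nx, y) ∈ H.Nbr s})

/-- The far dominator `fd(s,t)`: for `t` strictly right of `s`, the leftmost vertex of
`N(s)` to the right of `t`, ties broken towards the base line; if there is no such vertex,
the point `r(s)` (symmetric otherwise). -/
def fd (s t : ℝ × ℝ) : ℝ × ℝ :=
  if s.1 < t.1 then
    if ∃ w ∈ H.Nbr s, t.1 ≤ w.1 then
      let nx := sInf {x | (∃ y, (x, y) ∈ H.Nbr s) ∧ t.1 ≤ x}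
      (nx, closestToBase {y | (nx, y) ∈ H.Nbr s})
    else H.rpt s
  else
    if ∃ w ∈ H.Nbr s, w.1 ≤ t.1 then
      let nx := sSup {x | (∃ y, (x, y) ∈ H.Nbr s) ∧ x ≤ t.1}
      (nx, closestToBase {y | (nx, y) ∈ H.Nbr s})
    else H.lpt s

/-- The sequence `a^i(s)`: `a^0(s) = s`, and `a^i(s)` is the leftmost vertex of
`A^i(s) = {v ∈ N(s) : ℓ(v)_x < ℓ(a^{i-1}(s))_x}` (ties towards the base line),
or `a^{i-1}(s)` if `A^i(s)` is empty. -/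
def aSeq (s : ℝ × ℝ) : ℕ → ℝ × ℝ := fun k =>
  Nat.rec (motive := fun _ => ℝ × ℝ) s
    (fun _ prev =>
      let A : Set (ℝ × ℝ) := {v | v ∈ H.Nbr s ∧ (H.lpt v).1 < (H.lpt prev).1}
      if A = ∅ then prev
      else
        let ax := sInf {x | ∃ y, (x, y) ∈ A}
        (ax, closestToBase {y | (ax, y) ∈ A}))
    k

/-- The sequence `b^i(s)`: `b^0(s) = s`, and `b^i(s)` is the rightmost vertex of
`B^i(s) = {v ∈ N(s) : r(v)_x > r(b^{i-1}(s))_x}` (ties towards the base line),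
or `b^{i-1}(s)` if `B^i(s)` is empty. -/
def bSeq (s : ℝ × ℝ) : ℕ → ℝ × ℝ := fun k =>
  Nat.rec (motive := fun _ => ℝ × ℝ) s
    (fun _ prev =>
      let B : Set (ℝ × ℝ) := {v | v ∈ H.Nbr s ∧ (H.rpt prev).1 < (H.rpt v).1}
      if B = ∅ then prev
      else
        let bx := sSup {x | ∃ y, (x, y) ∈ B}
        (bx, closestToBase {y | (bx, y) ∈ B}))
    k

/-- The pair of the `k`-th bottom dominator `bd^k(s)` and `k`-th top dominator `td^k(s)`:
`bd^0(s) = td^0(s) = s`; for `k > 0`, with `I^k(s) = I(bd^{k-1}(s)) ∪ I(td^{k-1}(s))`,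
`bd^k(s)` is the leftmost vertex of `I^k(s)⁻` minimizing the distance to the base line,
and `td^k(s)` the leftmost vertex of `I^k(s)⁺` minimizing the distance to the base line;
if one of the two sets is empty, the corresponding dominator equals the other one. -/
def bdtd (s : ℝ × ℝ) : ℕ → (ℝ × ℝ) × (ℝ × ℝ) := fun k =>
  Nat.rec (motive := fun _ => (ℝ × ℝ) × (ℝ × ℝ)) (s, s)
    (fun _ p =>
      let J : Set (ℝ × ℝ) := H.Iv p.1 ∪ H.Iv p.2
      let Jm : Set (ℝ × ℝ) := {v | v ∈ J ∧ v.2 < 0}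
      let Jp : Set (ℝ × ℝ) := {v | v ∈ J ∧ 0 < v.2}
      if Jm = ∅ then (leftmostLowest Jp, leftmostLowest Jp)
      else if Jp = ∅ then (leftmostLowest Jm, leftmostLowest Jm)
      else (leftmostLowest Jm, leftmostLowest Jp))
    k

/-- The `k`-th interval `I^k(s)`: `I^0(s) = {s}` and
`I^{k+1}(s) = I(bd^k(s)) ∪ I(td^k(s))`. -/
def Ipow (s : ℝ × ℝ) : ℕ → Set (ℝ × ℝ) := fun k =>
  Nat.rec (motive := fun _ => Set (ℝ × ℝ)) {s}
    (fun k _ => H.Iv (H.bdtd s k).1 ∪ H.Iv (H.bdtd s k).2) k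

/-- `w` lies on a shortest path from `s` to `t` in the visibility graph. -/
def OnShortestPath (s t w : ↥H.verts) : Prop :=
  ∃ p : H.visGraph.Walk s t, p.length = H.visGraph.dist s t ∧ w ∈ p.support

end DoubleHistogram

/-- A routing scheme for a graph `G`: every vertex carries a binary label and a binary
routing table, and the routing function maps (link table of the current vertex, routing
table of the current vertex, label of the target, current header) to the next vertex
together with the new header. -/
structure RoutingScheme {V : Type} (G : SimpleGraph V) where
  lab : V → List Bool
  tab : V → List Bool
  route : Set (List Bool) → List Bool → List Bool → List Bool → V × List Bool

namespace RoutingScheme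

variable {V : Type} {G : SimpleGraph V} (R : RoutingScheme G)

/-- One routing step at vertex `p` with header `h`, towards the target `t`: the routing
function is applied to the link table of `p` (the labels of its closed neighborhood),
the routing table of `p`, the label of `t` and the header `h`. -/
def step (t p : V) (h : List Bool) : V × List Bool :=
  R.route (R.lab '' {w | w = p ∨ G.Adj p w}) (R.tab p) (R.lab t) h

/-- The routing sequence from `s` towards `t`, starting with the empty header. -/
def seq (s t : V) : ℕ → V × List Bool := fun k =>
  Nat.rec (motive := fun _ => V × List Bool) (s, ([] : List Bool))
    (fun _ q => R.step t q.1 q.2) k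

end RoutingScheme

/-!
`I(v)` consists of the vertices whose abscissa lies in the chord `[lhit v, rhit v]`, the
maximal horizontal segment of `P` through `v`. Every vertical line meets a double histogram in
a segment crossing the base line, so the horizontal sections of `P` only grow as they approach
the base line. Hence, of two overlapping chords on the same side, the one closer to the base
line contains the other, and the intervals inherit this laminarity.
-/

section ChordOfClosedSet

variable {α : Type*} [ConditionallyCompleteLinearOrder α] {S : Set α} {a x : α}

theorem csInf_le_of_Icc_subset (hS : BddBelow S) (hxa : x ≤ a) (hx : Icc x a ⊆ S) :
    sInf {x | x ≤ a ∧ Icc x a ⊆ S} ≤ x :=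
  csInf_le (hS.mono fun _ hy => hy.2 ⟨le_rfl, hy.1⟩) ⟨hxa, hx⟩

theorem le_csSup_of_Icc_subset (hS : BddAbove S) (hax : a ≤ x) (hx : Icc a x ⊆ S) :
    x ≤ sSup {x | a ≤ x ∧ Icc a x ⊆ S} :=
  le_csSup (hS.mono fun _ hy => hy.2 ⟨hy.1, le_rfl⟩) ⟨hax, hx⟩

variable [TopologicalSpace α] [OrderTopology α]

theorem Icc_csInf_subset (hS : IsClosed S) (hSb : BddBelow S) (ha : a ∈ S) :
    Icc (sInf {x | x ≤ a ∧ Icc x a ⊆ S}) a ⊆ S := by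
  set T := {x | x ≤ a ∧ Icc x a ⊆ S}
  have hTS : T ⊆ S := fun y hy => hy.2 ⟨le_rfl, hy.1⟩
  have hT : T.Nonempty := ⟨a, le_rfl, by simpa using ha⟩
  rintro t ⟨hlt, hta⟩
  rcases hlt.eq_or_lt with rfl | hlt
  · exact hS.closure_subset (closure_mono hTS (csInf_mem_closure hT (hSb.mono hTS)))
  · obtain ⟨y, hy, hyt⟩ := exists_lt_of_csInf_lt hT hlt
    exact hy.2 ⟨hyt.le, hta⟩

theorem Icc_csSup_subset (hS : IsClosed S) (hSb : BddAbove S) (ha : a ∈ S) :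
    Icc a (sSup {x | a ≤ x ∧ Icc a x ⊆ S}) ⊆ S := by
  set T := {x | a ≤ x ∧ Icc a x ⊆ S}
  have hTS : T ⊆ S := fun y hy => hy.2 ⟨hy.1, le_rfl⟩
  have hT : T.Nonempty := ⟨a, le_rfl, by simpa using ha⟩
  rintro t ⟨hat, htu⟩
  rcases htu.eq_or_lt with rfl | htu
  · exact hS.closure_subset (closure_mono hTS (csSup_mem_closure hT (hSb.mono hTS)))
  · obtain ⟨y, hy, hty⟩ := exists_lt_of_lt_csSup hT htu
    exact hy.2 ⟨hat, hty.le⟩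

end ChordOfClosedSet

theorem mem_uIcc_zero_or_mem_uIcc_zero_of_mul_nonneg {α : Type*} [Ring α] [LinearOrder α]
    [IsStrictOrderedRing α] {a b : α} (hab : 0 ≤ a * b) : a ∈ uIcc 0 b ∨ b ∈ uIcc 0 a := by
  simp only [mem_uIcc]
  rcases mul_nonneg_iff.1 hab with ⟨ha, hb⟩ | ⟨ha, hb⟩ <;> rcases le_total a b with h | h <;>
    tauto

namespace DoubleHistogram

variable (H : DoubleHistogram)

def row (y : ℝ) : Set ℝ := {x | (x, y) ∈ H.region}

def chord (v : ℝ × ℝ) : Set ℝ := Icc (H.lhit v) (H.rhit v)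

theorem isCompact_region : IsCompact H.region :=
  (isCompact_iUnion fun _ => isCompact_Icc.prod isCompact_Icc).union
    (isCompact_iUnion fun _ => isCompact_Icc.prod isCompact_Icc)

theorem verts_subset_region : H.verts ⊆ H.region := by
  have hxs (i : Fin H.m) := (H.xs_mono (Fin.castSucc_lt_succ (i := i))).le
  have hys (j : Fin H.n) := (H.ys_mono (Fin.castSucc_lt_succ (i := j))).le
  refine union_subset_union (iUnion_mono fun i => ?_) (iUnion_mono fun j => ?_) <;>
    refine insert_subset_iff.2 ⟨?_, singleton_subset_iff.2 ?_⟩ <;>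
    simp [hxs, hys, (H.d_neg _).le, (H.h_pos _).le]

theorem isClosed_row (y : ℝ) : IsClosed (H.row y) :=
  H.isCompact_region.isClosed.preimage (continuous_id.prodMk continuous_const)

theorem row_subset_image_fst (y : ℝ) : H.row y ⊆ Prod.fst '' H.region :=
  fun x hx => ⟨(x, y), hx, rfl⟩

theorem bddBelow_row (y : ℝ) : BddBelow (H.row y) :=
  ((H.isCompact_region.image continuous_fst).bddBelow).mono (H.row_subset_image_fst y)

theorem bddAbove_row (y : ℝ) : BddAbove (H.row y) :=
  ((H.isCompact_region.image continuous_fst).bddAbove).mono (H.row_subset_image_fst y)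

theorem row_subset_row {y y' : ℝ} (hy : y ∈ uIcc 0 y') : H.row y' ⊆ H.row y := by
  intro x hx
  simp only [row, region, mem_ofPred_eq, mem_union, mem_iUnion, mem_prod, mem_Icc] at hx ⊢
  rcases hx with ⟨i, hx, hdi, hy'⟩ | ⟨j, hx, hy', hhj⟩
  · rw [uIcc_of_ge hy'] at hy
    exact Or.inl ⟨i, hx, hdi.trans hy.1, hy.2⟩
  · rw [uIcc_of_le hy'] at hy
    exact Or.inr ⟨j, hx, hy.1, hy.2.trans hhj⟩

theorem prod_singleton_subset_region_iff {s : Set ℝ} {y : ℝ} :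
    s ×ˢ {y} ⊆ H.region ↔ s ⊆ H.row y := by
  simp [subset_def, row]

theorem lhit_eq (v : ℝ × ℝ) : H.lhit v = sInf {x | x ≤ v.1 ∧ Icc x v.1 ⊆ H.row v.2} := by
  simp only [lhit, prod_singleton_subset_region_iff]

theorem rhit_eq (v : ℝ × ℝ) : H.rhit v = sSup {x | v.1 ≤ x ∧ Icc v.1 x ⊆ H.row v.2} := by
  simp only [rhit, prod_singleton_subset_region_iff]

theorem Iv_eq (v : ℝ × ℝ) : H.Iv v = H.verts ∩ Prod.fst ⁻¹' H.chord v := by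
  have hl : (H.lpt v).1 = H.lhit v := by unfold lpt; split_ifs with h <;> simp [h]
  have hr : (H.rpt v).1 = H.rhit v := by unfold rpt; split_ifs with h <;> simp [h]
  simp only [Iv, ivl, hl, hr]
  rfl

variable {H}

theorem lhit_le {v : ℝ × ℝ} (hv : v ∈ H.region) : H.lhit v ≤ v.1 := by
  rw [lhit_eq]
  exact csInf_le_of_Icc_subset (H.bddBelow_row _) le_rfl
    (by rw [Icc_self, singleton_subset_iff]; exact hv)

theorem le_rhit {v : ℝ × ℝ} (hv : v ∈ H.region) : v.1 ≤ H.rhit v := by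
  rw [rhit_eq]
  exact le_csSup_of_Icc_subset (H.bddAbove_row _) le_rfl
    (by rw [Icc_self, singleton_subset_iff]; exact hv)

theorem chord_subset_row {v : ℝ × ℝ} (hv : v ∈ H.region) : H.chord v ⊆ H.row v.2 := by
  rw [chord, ← Icc_union_Icc_eq_Icc (lhit_le hv) (le_rhit hv), lhit_eq, rhit_eq]
  exact union_subset (Icc_csInf_subset (H.isClosed_row _) (H.bddBelow_row _) hv)
    (Icc_csSup_subset (H.isClosed_row _) (H.bddAbove_row _) hv)

theorem Icc_subset_chord {v : ℝ × ℝ} {a b : ℝ} (ha : a ≤ v.1) (hb : v.1 ≤ b)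
    (hab : Icc a b ⊆ H.row v.2) : Icc a b ⊆ H.chord v := by
  refine Icc_subset_Icc ?_ ?_
  · rw [lhit_eq]
    exact csInf_le_of_Icc_subset (H.bddBelow_row _) ha ((Icc_subset_Icc_right hb).trans hab)
  · rw [rhit_eq]
    exact le_csSup_of_Icc_subset (H.bddAbove_row _) hb ((Icc_subset_Icc_left ha).trans hab)

/-- Rows of `P` widen towards the base line, so the union of the two overlapping chords is a
segment in the row of `v`, hence inside its chord by maximality. -/
theorem chord_subset_chord {v w : ℝ × ℝ} (hv : v ∈ H.region) (hw : w ∈ H.region)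
    (hy : v.2 ∈ uIcc 0 w.2) (hvw : (H.chord v ∩ H.chord w).Nonempty) :
    H.chord w ⊆ H.chord v := by
  obtain ⟨x, ⟨hlv, hrv⟩, hlw, hrw⟩ := hvw
  have hunion : H.chord v ∪ H.chord w =
      Icc (min (H.lhit v) (H.lhit w)) (max (H.rhit v) (H.rhit w)) :=
    Icc_union_Icc' (hlw.trans hrv) (hlv.trans hrw)
  have hsub : H.chord v ∪ H.chord w ⊆ H.row v.2 :=
    union_subset (chord_subset_row hv) ((chord_subset_row hw).trans (H.row_subset_row hy))
  calc H.chord w ⊆ H.chord v ∪ H.chord w := subset_union_right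
    _ ⊆ H.chord v := by
      rw [hunion] at hsub ⊢
      exact Icc_subset_chord ((min_le_left _ _).trans (lhit_le hv))
        ((le_rhit hv).trans (le_max_left _ _)) hsub

end DoubleHistogram

/-- In a double histogram, the intervals of two vertices on the same side
of the base line form a laminar pair. -/
theorem intervals_on_same_side_laminar
    (H : DoubleHistogram) (v w : ℝ × ℝ) (hv : v ∈ H.verts) (hw : w ∈ H.verts)
    (hside : 0 < v.2 * w.2) :
    H.Iv v ∩ H.Iv w = ∅ ∨ H.Iv v ⊆ H.Iv w ∨ H.Iv w ⊆ H.Iv v := by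
  simp only [H.Iv_eq]
  by_cases hvw : (H.chord v ∩ H.chord w).Nonempty
  · have hvr := H.verts_subset_region hv
    have hwr := H.verts_subset_region hw
    right
    rcases mem_uIcc_zero_or_mem_uIcc_zero_of_mul_nonneg hside.le with hy | hy
    · exact Or.inr (inter_subset_inter_right _
        (preimage_mono (DoubleHistogram.chord_subset_chord hvr hwr hy hvw)))
    · exact Or.inl (inter_subset_inter_right _
        (preimage_mono (DoubleHistogram.chord_subset_chord hwr hvr hy (inter_comm .. ▸ hvw))))
  · left
    rw [not_nonempty_iff_eq_empty] at hvw
    rw [inter_inter_inter_comm, inter_self, ← preimage_inter, hvw, preimage_empty, inter_empty]
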